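/- Raising a Student-t density to the power $\alpha = 1 + \frac{2}{\nu+d}$ yields a normalizing-constant identity: for any $x \in \mathbb{R}^d$, $q_{\mu_q,\Sigma_q,\nu_q}(x)^{\alpha} = \frac{Z_{\nu^{(\alpha)}, \Sigma^{(\alpha)}}}{Z_{\nu_q, \Sigma_q}^{\alpha}} \, q_{\mu_q, \Sigma^{(\alpha)}, \nu^{(\alpha)}}(x)$, where $\nu^{(\alpha)} = \nu_q + 2\frac{\nu_q+d}{\nu+d}$ and $\Sigma^{(\alpha)} = \frac{\nu_q}{\nu^{(\alpha)}}\Sigma_q$. -/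

import Mathlib

open Matrix MeasureTheory

/-- Normalizing constant of the multivariate Student-t distribution. -/
noncomputable def studentZ (d : ℕ) (ν : ℝ) (S : Matrix (Fin d) (Fin d) ℝ) : ℝ :=
  (Real.Gamma (ν / 2) / Real.Gamma ((ν + d) / 2)) *
    Real.sqrt (ν ^ d * Real.pi ^ d * S.det)

/-- Multivariate Student-t density on `ℝ^d` with location `μ`, scale `S`,
and `ν` degrees of freedom. -/
noncomputable def studentT (d : ℕ) (μ : Fin d → ℝ) (S : Matrix (Fin d) (Fin d) ℝ)
    (ν : ℝ) (x : Fin d → ℝ) : ℝ :=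
  (studentZ d ν S)⁻¹ *
    (1 + (1 / ν) * ((x - μ) ⬝ᵥ (S⁻¹ *ᵥ (x - μ)))) ^ (-(ν + d) / 2)

/-- pointwise normalizing-constant identity for the α-th power of
a Student-t density, with `α = 1 + 2/(ν+d)`. -/
theorem studentT_pow_alpha (d : ℕ) (μq : Fin d → ℝ)
    (Sq : Matrix (Fin d) (Fin d) ℝ) (hSq : Sq.PosDef)
    (νq ν : ℝ) (hνq : 0 < νq) (hν : 0 < ν)
    (α : ℝ) (hα : α = 1 + 2 / (ν + d))
    (να : ℝ) (hνα : να = νq + 2 * (νq + d) / (ν + d))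
    (Sα : Matrix (Fin d) (Fin d) ℝ) (hSα : Sα = (νq / να) • Sq) :
    ∀ x : Fin d → ℝ,
      (studentT d μq Sq νq x) ^ α
        = (studentZ d να Sα / (studentZ d νq Sq) ^ α) * studentT d μq Sα να x := by
  intro x
  have hd : (0:ℝ) ≤ d := Nat.cast_nonneg d
  have hνd : (0:ℝ) < ν + d := by linarith
  have hνqd : (0:ℝ) < νq + d := by linarith
  have hναpos : 0 < να := by
    rw [hνα]; positivity
  set v := x - μq with hv
  set Q := v ⬝ᵥ (Sq⁻¹ *ᵥ v) with hQ
  have hQ0 : 0 ≤ Q := by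
    have := hSq.inv.posSemidef.re_dotProduct_nonneg v
    simpa [hQ] using this
  have hbase : 0 < 1 + (1 / νq) * Q := by positivity
  -- Z positivity
  have hZq : 0 < studentZ d νq Sq := by
    unfold studentZ
    have := hSq.det_pos
    positivity
  have hSαdet : 0 < Sα.det := by
    rw [hSα, Matrix.det_smul]
    have := hSq.det_pos
    positivity
  have hZα : 0 < studentZ d να Sα := by
    unfold studentZ
    positivity
  -- inverse of Sα
  have hcq : νq / να ≠ 0 := by positivity
  have hSαinv : Sα⁻¹ = (να / νq) • Sq⁻¹ := by
    rw [hSα]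
    letI : Invertible (νq / να : ℝ) := invertibleOfNonzero hcq
    rw [Matrix.inv_smul (A := Sq) (k := νq / να) hSq.det_pos.ne'.isUnit]
    congr 1
    rw [invOf_eq_inv, inv_div]
  -- quadratic form equality
  have harith : ∀ Q' : ℝ, (1 / να) * ((να / νq) * Q') = (1 / νq) * Q' := by
    intro Q'; field_simp
  have hQα : (1 / να) * (v ⬝ᵥ (Sα⁻¹ *ᵥ v)) = (1 / νq) * Q := by
    rw [hSαinv, Matrix.smul_mulVec, dotProduct_smul, smul_eq_mul, harith]
  -- exponent equality
  have hexp : -(νq + d) / 2 * α = -(να + d) / 2 := by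
    rw [hα, hνα]
    field_simp
    ring
  unfold studentT
  rw [← hv, ← hQ, hQα]
  rw [Real.mul_rpow (inv_nonneg.mpr hZq.le) (Real.rpow_nonneg hbase.le _),
    ← Real.rpow_mul hbase.le, hexp, Real.inv_rpow hZq.le]
  field_simp
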